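/- arXiv:1602.01768 — 4 statements merged into one kernel-verified Lean document; each statement's English description precedes it below -/
import Mathlib

section
/- Let A ∈ ℝ^{n×n} be invertible, W ∈ ℝ^{n×n} symmetric positive definite, S ∈ ℝ^{n×q} of full column rank, and X_k ∈ ℝ^{n×n}. Then the matrix S^T A W A^T S is invertible, and X_{k+1} := X_k + W A^T S (S^T A W A^T S)^{-1} S^T (I − A X_k) is the unique minimizer of ‖X − X_k‖_{F(W^{-1})} over the set {X ∈ ℝ^{n×n} : S^T A X = S^T}. -/
open Matrix BigOperators

/-- Squared weighted Frobenius norm: `‖X‖_{F(W⁻¹)}² = Tr(Xᵀ W⁻¹ X W⁻¹)`. -/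
noncomputable def wFNormSq {n : ℕ} (W X : Matrix (Fin n) (Fin n) ℝ) : ℝ :=
  (Xᵀ * W⁻¹ * X * W⁻¹).trace

/-- Weighted Frobenius norm `‖X‖_{F(W⁻¹)}`. -/
noncomputable def wFNorm {n : ℕ} (W X : Matrix (Fin n) (Fin n) ℝ) : ℝ :=
  Real.sqrt (wFNormSq W X)

/-!
Since `Aᵀ S` is injective, `Sᵀ A W Aᵀ S = (Aᵀ S)ᵀ W (Aᵀ S)` is positive definite. The correction
`D = W Aᵀ S (Sᵀ A W Aᵀ S)⁻¹ Sᵀ (I - A Xₖ)` satisfies `Sᵀ A D = Sᵀ (I - A Xₖ)`, so `Xₖ + D` is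
feasible, and `Dᵀ W⁻¹` factors through `Sᵀ A`, so `D` is orthogonal, for the inner product
`Tr(Xᵀ W⁻¹ Y W⁻¹)`, to every `E` with `Sᵀ A E = 0`. For feasible `X` the difference
`E = X - (Xₖ + D)` is such an `E`, and Pythagoras gives `‖X - Xₖ‖² = ‖D‖² + ‖E‖²`.
-/

namespace Matrix

variable {m n p : Type*} [Fintype n] [Fintype p]

lemma mulVec_injective_of_rank_eq_card {K : Type*} [Field K] {B : Matrix m n K}
    (hB : B.rank = Fintype.card n) : Function.Injective B.mulVec := by
  rw [mulVec_injective_iff, linearIndependent_iff_card_eq_finrank_span, Set.finrank,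
    ← rank_eq_finrank_span_cols, hB]

lemma trace_transpose_mul_self_pos [Fintype m] {G : Matrix m n ℝ} (hG : G ≠ 0) :
    0 < (Gᵀ * G).trace := by
  have hnonneg := (posSemidef_conjTranspose_mul_self G).trace_nonneg
  have hne := trace_conjTranspose_mul_self_eq_zero_iff.not.mpr hG
  rw [conjTranspose_eq_transpose_of_trivial] at hnonneg hne
  exact hnonneg.lt_of_ne' hne

variable [DecidableEq n]

open scoped MatrixOrder in
/-- Write `P = Yᵀ Y` with `Y` invertible: the trace is the squared Frobenius norm of `Y X Yᵀ`. -/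
lemma trace_transpose_mul_mul_mul_pos {P X : Matrix n n ℝ} (hP : P.PosDef) (hX : X ≠ 0) :
    0 < (Xᵀ * P * X * P).trace := by
  obtain ⟨Y, hY, rfl⟩ := CStarAlgebra.isStrictlyPositive_iff_eq_star_mul_self.mp
    hP.isStrictlyPositive
  rw [star_eq_conjTranspose, conjTranspose_eq_transpose_of_trivial]
  have hYXY : Y * X * Yᵀ ≠ 0 := by
    have hYt : IsUnit Yᵀ := by rwa [isUnit_iff_isUnit_det, det_transpose, ← isUnit_iff_isUnit_det]
    rwa [Ne, hYt.mul_left_eq_zero, hY.mul_right_eq_zero]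
  convert trace_transpose_mul_self_pos hYXY using 1
  simp only [transpose_mul, transpose_transpose, Matrix.mul_assoc]
  rw [trace_mul_comm Y]
  simp only [Matrix.mul_assoc]

lemma posDef_transpose_mul_mul_mul_mul {W A : Matrix n n ℝ} {S : Matrix n p ℝ}
    (hW : W.PosDef) (hA : IsUnit A.det) (hS : S.rank = Fintype.card p) :
    (Sᵀ * A * W * Aᵀ * S).PosDef := by
  have hinj : Function.Injective (Aᵀ * S).mulVec := by
    have hAt : IsUnit Aᵀ := by rwa [isUnit_iff_isUnit_det, det_transpose]
    rw [show (Aᵀ * S).mulVec = Aᵀ.mulVec ∘ S.mulVec from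
      funext fun v => (mulVec_mulVec v _ _).symm]
    exact (mulVec_injective_iff_isUnit.mpr hAt).comp (mulVec_injective_of_rank_eq_card hS)
  simpa [conjTranspose_eq_transpose_of_trivial, Matrix.mul_assoc] using
    hW.conjTranspose_mul_mul_same hinj

end Matrix

namespace Matrix

variable {R : Type*} [CommRing R] {n p : Type*} [Fintype n] [Fintype p] [DecidableEq p]

noncomputable def sketchGain (A W : Matrix n n R) (S : Matrix n p R) : Matrix n n R :=
  W * Aᵀ * S * (Sᵀ * A * W * Aᵀ * S)⁻¹ * Sᵀ

variable {A W : Matrix n n R} {S : Matrix n p R}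

lemma transpose_mul_mul_sketchGain (hM : IsUnit (Sᵀ * A * W * Aᵀ * S).det) :
    Sᵀ * A * sketchGain A W S = Sᵀ := by
  rw [sketchGain, show Sᵀ * A * (W * Aᵀ * S * (Sᵀ * A * W * Aᵀ * S)⁻¹ * Sᵀ) =
      (Sᵀ * A * W * Aᵀ * S) * ((Sᵀ * A * W * Aᵀ * S)⁻¹ * Sᵀ) by simp only [Matrix.mul_assoc],
    mul_nonsing_inv_cancel_left _ _ hM]

lemma sketchGain_mul_transpose_mul_inv_mul_eq_zero [DecidableEq n] (hW : W.IsSymm)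
    (hWdet : IsUnit W.det) (C : Matrix n n R) {E : Matrix n n R} (hE : Sᵀ * A * E = 0) :
    (sketchGain A W S * C)ᵀ * W⁻¹ * E = 0 := by
  have hWW : Wᵀ * W⁻¹ = 1 := by rw [hW.eq, mul_nonsing_inv _ hWdet]
  calc (sketchGain A W S * C)ᵀ * W⁻¹ * E
      = Cᵀ * S * (Sᵀ * A * W * Aᵀ * S)⁻¹ᵀ * (Sᵀ * A * (Wᵀ * W⁻¹) * E) := by
        simp only [sketchGain, transpose_mul, transpose_transpose, Matrix.mul_assoc]
    _ = 0 := by rw [hWW, Matrix.mul_one, hE, Matrix.mul_zero]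

end Matrix

section WeightedFrobenius

variable {n : ℕ} {W X Y : Matrix (Fin n) (Fin n) ℝ}

lemma wFNormSq_pos (hW : W.PosDef) (hX : X ≠ 0) : 0 < wFNormSq W X :=
  trace_transpose_mul_mul_mul_pos hW.inv hX

lemma wFNormSq_nonneg (hW : W.PosDef) (X : Matrix (Fin n) (Fin n) ℝ) : 0 ≤ wFNormSq W X := by
  rcases eq_or_ne X 0 with rfl | hX
  · simp [wFNormSq]
  · exact (wFNormSq_pos hW hX).le

lemma wFNormSq_add_of_transpose_mul_inv_mul_eq_zero (hW : W.IsSymm) (hXY : Xᵀ * W⁻¹ * Y = 0) :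
    wFNormSq W (X + Y) = wFNormSq W X + wFNormSq W Y := by
  have hYX : (Yᵀ * W⁻¹ * X * W⁻¹).trace = 0 := by
    rw [← trace_transpose]
    simp only [transpose_mul, transpose_transpose, transpose_nonsing_inv, hW.eq]
    rw [trace_mul_comm, ← Matrix.mul_assoc, hXY, Matrix.zero_mul, trace_zero]
  simp only [wFNormSq, transpose_add, Matrix.add_mul, Matrix.mul_add, trace_add, hXY,
    Matrix.zero_mul, trace_zero, hYX]
  ring

lemma wFNorm_lt_wFNorm_add (hW : W.PosDef) (hXY : Xᵀ * W⁻¹ * Y = 0) (hY : Y ≠ 0) :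
    wFNorm W X < wFNorm W (X + Y) := by
  refine Real.sqrt_lt_sqrt (wFNormSq_nonneg hW X) ?_
  rw [wFNormSq_add_of_transpose_mul_inv_mul_eq_zero
    (isHermitian_iff_isSymm.mp hW.isHermitian) hXY]
  linarith [wFNormSq_pos hW hY]

end WeightedFrobenius

theorem stmt0 {n q : ℕ} (A W : Matrix (Fin n) (Fin n) ℝ)
    (S : Matrix (Fin n) (Fin q) ℝ) (Xk : Matrix (Fin n) (Fin n) ℝ)
    (hA : IsUnit A.det) (hW : W.PosDef) (hS : S.rank = q) :
    IsUnit (Sᵀ * A * W * Aᵀ * S).det ∧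
    Sᵀ * A * (Xk + W * Aᵀ * S * (Sᵀ * A * W * Aᵀ * S)⁻¹ * Sᵀ * (1 - A * Xk)) = Sᵀ ∧
    ∀ X : Matrix (Fin n) (Fin n) ℝ, Sᵀ * A * X = Sᵀ →
      X ≠ Xk + W * Aᵀ * S * (Sᵀ * A * W * Aᵀ * S)⁻¹ * Sᵀ * (1 - A * Xk) →
      wFNorm W ((Xk + W * Aᵀ * S * (Sᵀ * A * W * Aᵀ * S)⁻¹ * Sᵀ * (1 - A * Xk)) - Xk) <
        wFNorm W (X - Xk) := by
  have hM : IsUnit (Sᵀ * A * W * Aᵀ * S).det :=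
    (isUnit_iff_isUnit_det _).mp
      (posDef_transpose_mul_mul_mul_mul hW hA (hS.trans (Fintype.card_fin q).symm)).isUnit
  have hWsymm : W.IsSymm := isHermitian_iff_isSymm.mp hW.isHermitian
  set D := sketchGain A W S * (1 - A * Xk)
  have hsolves : Sᵀ * A * (Xk + D) = Sᵀ := by
    rw [Matrix.mul_add, ← Matrix.mul_assoc, transpose_mul_mul_sketchGain hM, Matrix.mul_sub,
      Matrix.mul_one, Matrix.mul_assoc, add_sub_cancel]
  refine ⟨hM, hsolves, fun X hX hne => ?_⟩
  have horth : Dᵀ * W⁻¹ * (X - (Xk + D)) = 0 :=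
    sketchGain_mul_transpose_mul_inv_mul_eq_zero hWsymm ((isUnit_iff_isUnit_det _).mp hW.isUnit) _
      (by rw [Matrix.mul_sub, hX, hsolves, sub_self])
  convert wFNorm_lt_wFNorm_add hW horth (sub_ne_zero.mpr hne) using 2
  · exact add_sub_cancel_left Xk D
  · abel
end

section
/- Let A ∈ ℝ^{n×n} be invertible, W ∈ ℝ^{n×n} symmetric positive definite, and let S_1, …, S_r with S_i ∈ ℝ^{n×q_i} each have full column rank, with probabilities p_i > 0, Σ_{i=1}^r p_i = 1. Set Z_i := A^T S_i (S_i^T A W A^T S_i)^{-1} S_i^T A and M := Σ_{i=1}^r p_i W^{1/2} Z_i W^{1/2}. Then the spectrum of the symmetric matrix M is contained in [0,1]; equivalently, 0 ≤ x^T M x ≤ ‖x‖₂² for all x ∈ ℝ^n. -/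
open Matrix BigOperators

/-- The positive semidefinite square root of a positive semidefinite matrix
(the definition of `Matrix.PosSemidef.sqrt` in the older Mathlib, since removed). -/
noncomputable def Matrix.PosSemidef.sqrt {n 𝕜 : Type*} [Fintype n] [DecidableEq n] [RCLike 𝕜] [PartialOrder 𝕜] [StarOrderedRing 𝕜]
    {A : Matrix n n 𝕜} (hA : A.PosSemidef) : Matrix n n 𝕜 :=
  hA.1.eigenvectorUnitary.1 * diagonal ((↑) ∘ (fun x => √x) ∘ hA.1.eigenvalues) *
    (star hA.1.eigenvectorUnitary : Matrix n n 𝕜)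

/-!
With `Bᵢ := W^{1/2} Aᵀ Sᵢ`, the summand `W^{1/2} Zᵢ W^{1/2}` is `Bᵢ (Bᵢᵀ Bᵢ)⁻¹ Bᵢᵀ`, the orthogonal
projection onto the range of `Bᵢ`. Self-adjoint idempotents lie in `[0, 1]` for the Loewner order,
and `M` is a convex combination of them.
-/

namespace Matrix.PosSemidef
variable {n 𝕜 : Type*} [Fintype n] [DecidableEq n] [RCLike 𝕜]

lemma sqrt_eq_conjStarAlgAut [PartialOrder 𝕜] [StarOrderedRing 𝕜] {A : Matrix n n 𝕜}
    (hA : A.PosSemidef) : hA.sqrt = Unitary.conjStarAlgAut 𝕜 _ hA.1.eigenvectorUnitary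
      (diagonal ((↑) ∘ (fun x => √x) ∘ hA.1.eigenvalues)) :=
  rfl

lemma isHermitian_sqrt [PartialOrder 𝕜] [StarOrderedRing 𝕜] {A : Matrix n n 𝕜}
    (hA : A.PosSemidef) : hA.sqrt.IsHermitian := by
  rw [sqrt_eq_conjStarAlgAut, IsHermitian, ← star_eq_conjTranspose, ← map_star,
    star_eq_conjTranspose, diagonal_conjTranspose]
  congr 2
  funext i
  simp

open scoped ComplexOrder in
lemma sqrt_mul_sqrt {A : Matrix n n 𝕜} (hA : A.PosSemidef) : hA.sqrt * hA.sqrt = A := by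
  rw [sqrt_eq_conjStarAlgAut, ← map_mul, diagonal_mul_diagonal]
  conv_rhs => rw [hA.1.spectral_theorem]
  congr 2
  funext i
  simp only [Function.comp_apply, ← RCLike.ofReal_mul, Real.mul_self_sqrt (hA.eigenvalues_nonneg i)]

end Matrix.PosSemidef

namespace Matrix

/-- When `Bᴴ * B` is singular, `⁻¹` returns `0` and the product is the trivial projection `0`. -/
lemma isStarProjection_mul_inv_mul_conjTranspose {m k R : Type*} [Fintype m] [Fintype k]
    [DecidableEq k] [CommRing R] [StarRing R] (B : Matrix m k R) :
    IsStarProjection (B * (Bᴴ * B)⁻¹ * Bᴴ) := by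
  set G := Bᴴ * B with hG
  refine ⟨?_, ?_⟩
  · by_cases hdet : IsUnit G.det
    · calc B * G⁻¹ * Bᴴ * (B * G⁻¹ * Bᴴ) = B * (G⁻¹ * G) * G⁻¹ * Bᴴ := by
            simp only [hG, Matrix.mul_assoc]
        _ = B * G⁻¹ * Bᴴ := by rw [nonsing_inv_mul _ hdet, Matrix.mul_one]
    · simpa [nonsing_inv_apply_not_isUnit G hdet] using IsIdempotentElem.zero
  · rw [IsSelfAdjoint, star_eq_conjTranspose, conjTranspose_mul, conjTranspose_mul,
      conjTranspose_conjTranspose, (isHermitian_conjTranspose_mul_self B).inv.eq, Matrix.mul_assoc]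

open scoped MatrixOrder in
lemma dotProduct_mulVec_nonneg_and_le_of_mem_Icc {n : Type*} [Fintype n] [DecidableEq n]
    {M : Matrix n n ℝ} (hM : M ∈ Set.Icc 0 1) (x : n → ℝ) :
    0 ≤ x ⬝ᵥ M *ᵥ x ∧ x ⬝ᵥ M *ᵥ x ≤ x ⬝ᵥ x := by
  have h0 := hM.1.posSemidef.dotProduct_mulVec_nonneg x
  have h1 := (le_iff.mp hM.2).dotProduct_mulVec_nonneg x
  simp only [star_trivial, sub_mulVec, one_mulVec, dotProduct_sub, sub_nonneg] at h0 h1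
  exact ⟨h0, h1⟩

end Matrix

open scoped MatrixOrder in
theorem stmt7_general {n r : ℕ} (A W : Matrix (Fin n) (Fin n) ℝ)
    (q : Fin r → ℕ) (S : ∀ i, Matrix (Fin n) (Fin (q i)) ℝ)
    (hW : W.PosDef)
    (p : Fin r → ℝ) (hp : ∀ i, 0 < p i) (hsum : ∑ i, p i = 1) :
    let Whalf := hW.posSemidef.sqrt
    let Z := fun i => Aᵀ * S i * ((S i)ᵀ * A * W * Aᵀ * S i)⁻¹ * (S i)ᵀ * A
    let M := ∑ i, p i • (Whalf * Z i * Whalf)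
    Mᵀ = M ∧ ∀ x : Fin n → ℝ, 0 ≤ x ⬝ᵥ M.mulVec x ∧ x ⬝ᵥ M.mulVec x ≤ x ⬝ᵥ x := by
  intro Whalf Z M
  have hWhalf : Whalfᵀ = Whalf := by
    simpa [conjTranspose_eq_transpose_of_trivial] using hW.posSemidef.isHermitian_sqrt.eq
  have hW_eq : W = Whalf * Whalf := hW.posSemidef.sqrt_mul_sqrt.symm
  have hproj i : IsStarProjection (Whalf * Z i * Whalf) := by
    convert isStarProjection_mul_inv_mul_conjTranspose (Whalf * Aᵀ * S i) using 1
    simp only [Z, hW_eq, conjTranspose_eq_transpose_of_trivial, transpose_mul, transpose_transpose,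
      hWhalf, Matrix.mul_assoc]
  have hM : M ∈ Set.Icc 0 1 :=
    (convex_Icc 0 1).sum_mem (fun i _ => (hp i).le) hsum fun i _ => (hproj i).mem_Icc
  refine ⟨?_, dotProduct_mulVec_nonneg_and_le_of_mem_Icc hM⟩
  simpa [conjTranspose_eq_transpose_of_trivial] using hM.1.posSemidef.isHermitian.eq

theorem stmt7 {n r : ℕ} (A W : Matrix (Fin n) (Fin n) ℝ)
    (q : Fin r → ℕ) (S : ∀ i, Matrix (Fin n) (Fin (q i)) ℝ)
    (hA : IsUnit A.det) (hW : W.PosDef) (hS : ∀ i, (S i).rank = q i)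
    (p : Fin r → ℝ) (hp : ∀ i, 0 < p i) (hsum : ∑ i, p i = 1) :
    let Whalf := hW.posSemidef.sqrt
    let Z := fun i => Aᵀ * S i * ((S i)ᵀ * A * W * Aᵀ * S i)⁻¹ * (S i)ᵀ * A
    let M := ∑ i, p i • (Whalf * Z i * Whalf)
    Mᵀ = M ∧ ∀ x : Fin n → ℝ, 0 ≤ x ⬝ᵥ M.mulVec x ∧ x ⬝ᵥ M.mulVec x ≤ x ⬝ᵥ x :=
  stmt7_general A W q S hW p hp hsum
end

section
/- Let A ∈ ℝ^{n×n} be invertible, W ∈ ℝ^{n×n} symmetric positive definite, and let S_1, …, S_r with S_i ∈ ℝ^{n×q_i} each have full column rank, with probabilities p_i > 0, Σ_{i=1}^r p_i = 1. For X ∈ ℝ^{n×n}, define the i-th update X⁺_i := X + W A^T S_i (S_i^T A W A^T S_i)^{-1} S_i^T (I − A X), and Z_i := A^T S_i (S_i^T A W A^T S_i)^{-1} S_i^T A. Then each update satisfies X⁺_i − A^{-1} = (I − W Z_i)(X − A^{-1}), and consequently Σ_{i=1}^r p_i (X⁺_i − A^{-1}) = (I − W Σ_{i=1}^r p_i Z_i)(X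 − A^{-1}). -/
open Matrix BigOperators

theorem stmt8 {n r : ℕ} (A W : Matrix (Fin n) (Fin n) ℝ)
    (q : Fin r → ℕ) (S : ∀ i, Matrix (Fin n) (Fin (q i)) ℝ)
    (hA : IsUnit A.det) (hW : W.PosDef) (hS : ∀ i, (S i).rank = q i)
    (p : Fin r → ℝ) (hp : ∀ i, 0 < p i) (hsum : ∑ i, p i = 1)
    (X : Matrix (Fin n) (Fin n) ℝ) :
    let Z := fun i => Aᵀ * S i * ((S i)ᵀ * A * W * Aᵀ * S i)⁻¹ * (S i)ᵀ * A
    let Xp := fun i =>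
      X + W * Aᵀ * S i * ((S i)ᵀ * A * W * Aᵀ * S i)⁻¹ * (S i)ᵀ * (1 - A * X)
    (∀ i, Xp i - A⁻¹ = (1 - W * Z i) * (X - A⁻¹)) ∧
    ∑ i, p i • (Xp i - A⁻¹) = (1 - W * ∑ i, p i • Z i) * (X - A⁻¹) := by
  intro Z Xp
  have h : A * A⁻¹ = 1 := mul_nonsing_inv A hA
  have key : ∀ i, Xp i - A⁻¹ = (1 - W * Z i) * (X - A⁻¹) := by
    intro i
    show X + W * Aᵀ * S i * ((S i)ᵀ * A * W * Aᵀ * S i)⁻¹ * (S i)ᵀ * (1 - A * X) - A⁻¹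
        = (1 - W * (Aᵀ * S i * ((S i)ᵀ * A * W * Aᵀ * S i)⁻¹ * (S i)ᵀ * A)) * (X - A⁻¹)
    nth_rewrite 1 [← h]
    simp only [Matrix.mul_sub, Matrix.sub_mul, Matrix.one_mul, Matrix.mul_assoc]
    abel
  refine ⟨key, ?_⟩
  calc ∑ i, p i • (Xp i - A⁻¹) = ∑ i, p i • ((1 - W * Z i) * (X - A⁻¹)) := by
        simp only [key]
    _ = ∑ i, (p i • (X - A⁻¹) - W * (p i • Z i) * (X - A⁻¹)) := by
        refine Finset.sum_congr rfl fun i _ => ?_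
        rw [sub_mul, one_mul, smul_sub, Matrix.mul_smul, Matrix.smul_mul]
    _ = (∑ i, p i) • (X - A⁻¹) - W * (∑ i, p i • Z i) * (X - A⁻¹) := by
        rw [Finset.sum_sub_distrib, ← Finset.sum_smul, Finset.mul_sum, Finset.sum_mul]
    _ = (1 - W * ∑ i, p i • Z i) * (X - A⁻¹) := by
        rw [hsum, one_smul, sub_mul, one_mul]
end

section
/- Let A ∈ ℝ^{n×n} be invertible, W ∈ ℝ^{n×n} symmetric positive definite, and let S_1, …, S_r with S_i ∈ ℝ^{n×q_i} each have full column rank, with probabilities p_i > 0, Σ_{i=1}^r p_i = 1. Fix X_0 ∈ ℝ^{n×n}; for each k ≥ 0 and each path s = (s_0, …, s_{k−1}) ∈ {1,…,r}^k, define X_k(s) recursively by X_{j+1}(s) = X_j(s) + W A^T S_{s_j} (S_{s_j}^T A W A^T S_{s_j})^{-1} S_{s_j}^T (I − A X_j(s)), starting from X_0(s) = X_0. Then with ρ := 1 − λ_min(W^{1/2} (Σ_{i=1}^r p_i Z_i) W^{1/2}), where Z_i := A^T S_i (S_i^T A W A^T S_i)^{-1} S_i^T A, the norm of the expected error satisfies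 ‖Σ_{s ∈ {1,…,r}^k} (Π_{j<k} p_{s_j}) (X_k(s) − A^{-1})‖_{W^{-1}} ≤ ρ^k ‖X_0 − A^{-1}‖_{W^{-1}}. -/
/-!
The error `E = X - A⁻¹` of a sketch-and-project step with sketch `S` evolves linearly,
`E ↦ (1 - W Z) E`, so averaging over all paths gives `(1 - W Z̄)ᵏ E₀` with `Z̄ = ∑ pᵢ Zᵢ`.
Conjugating by `W^{1/2}` turns `1 - W Z̄` into `1 - W^{1/2} Z̄ W^{1/2} = ∑ pᵢ (1 - Pᵢ)`, where
`Pᵢ = W^{1/2} Zᵢ W^{1/2}` is an orthogonal projection. This symmetric matrix is therefore positive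
semidefinite, its spectral norm is its largest eigenvalue `1 - λ_min(W^{1/2} Z̄ W^{1/2})`, and
submultiplicativity of the norm gives the rate.
-/

open Matrix BigOperators

noncomputable def Zmat {n q : ℕ} (A W : Matrix (Fin n) (Fin n) ℝ)
    (S : Matrix (Fin n) (Fin q) ℝ) : Matrix (Fin n) (Fin n) ℝ :=
  Aᵀ * S * (Sᵀ * A * W * Aᵀ * S)⁻¹ * Sᵀ * A

/-- One sketch-and-project step for the inverse equation `A X = I` (row variant). -/
noncomputable def rowStep {n q : ℕ} (A W : Matrix (Fin n) (Fin n) ℝ)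
    (S : Matrix (Fin n) (Fin q) ℝ) (X : Matrix (Fin n) (Fin n) ℝ) :
    Matrix (Fin n) (Fin n) ℝ :=
  X + W * Aᵀ * S * (Sᵀ * A * W * Aᵀ * S)⁻¹ * Sᵀ * (1 - A * X)

/-- The spectral (ℓ₂ operator) norm of a real square matrix. -/
noncomputable def specNorm {n : ℕ} (M : Matrix (Fin n) (Fin n) ℝ) : ℝ :=
  ‖Matrix.toEuclideanCLM (𝕜 := ℝ) M‖

/-- The positive semidefinite square root of a positive semidefinite matrix
(the definition of `Matrix.PosSemidef.sqrt` in the older Mathlib). -/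
noncomputable def posSemidefSqrt {n : ℕ} {M : Matrix (Fin n) (Fin n) ℝ} (hM : M.PosSemidef) :
    Matrix (Fin n) (Fin n) ℝ :=
  hM.1.eigenvectorUnitary.1 * diagonal ((↑) ∘ (√·) ∘ hM.1.eigenvalues) *
  (star hM.1.eigenvectorUnitary : Matrix (Fin n) (Fin n) ℝ)

theorem sum_prod_smul_foldl_sub {ι 𝕜 R : Type*} [Fintype ι] [CommSemiring 𝕜] [Ring R]
    [Algebra 𝕜 R] (f : ι → R → R) (T : ι → R) (c : R) (hf : ∀ i x, f i x - c = T i * (x - c))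
    (p : ι → 𝕜) (k : ℕ) (x : R) :
    ∑ s : Fin k → ι, (∏ j, p (s j)) • ((List.ofFn s).foldl (fun y i => f i y) x - c) =
      (∑ i, p i • T i) ^ k * (x - c) := by
  induction k generalizing x with
  | zero => simp
  | succ k ih =>
    rw [← (Fin.consEquiv fun _ => ι).sum_comp, Fintype.sum_prod_type]
    simp only [Fin.consEquiv_apply, List.ofFn_succ, Fin.cons_zero, Fin.cons_succ,
      Fin.prod_univ_succ, List.foldl_cons, mul_smul, ← Finset.smul_sum, ih, hf, pow_succ,
      mul_assoc, Finset.sum_mul, Finset.mul_sum, smul_mul_assoc, mul_smul_comm]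

theorem sum_smul_sub_of_sum_eq_one {ι 𝕜 M : Type*} [Fintype ι] [Semiring 𝕜] [AddCommGroup M]
    [Module 𝕜 M] {p : ι → 𝕜} (hp : ∑ i, p i = 1) (a : M) (v : ι → M) :
    ∑ i, p i • (a - v i) = a - ∑ i, p i • v i := by
  simp only [smul_sub, Finset.sum_sub_distrib, ← Finset.sum_smul, hp, one_smul]

namespace Matrix

theorem semiconjBy_inv_one_sub_mul {K n : Type*} [Field K] [Fintype n] [DecidableEq n]
    {R W Z : Matrix n n K} (hR : IsUnit R.det) (hRR : R * R = W) :
    SemiconjBy R⁻¹ (1 - W * Z) (1 - R * Z * R) := by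
  have hRinv : R⁻¹ * R = 1 := nonsing_inv_mul _ hR
  have hinvR : R * R⁻¹ = 1 := mul_nonsing_inv _ hR
  calc R⁻¹ * (1 - W * Z) = R⁻¹ - R⁻¹ * R * R * Z := by rw [← hRR]; noncomm_ring
    _ = R⁻¹ - R * Z * (R * R⁻¹) := by rw [hRinv, hinvR]; noncomm_ring
    _ = (1 - R * Z * R) * R⁻¹ := by noncomm_ring

theorem mulVec_injective_of_rank_eq_card_s9 {K m n : Type*} [Field K] [Fintype m] [Fintype n]
    {S : Matrix m n K} (h : S.rank = Fintype.card n) : Function.Injective S.mulVec := by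
  rw [mulVec_injective_iff, linearIndependent_iff_card_eq_finrank_span, Set.finrank,
    ← rank_eq_finrank_span_cols, h]

section L2OpNorm

open scoped Matrix.Norms.L2Operator ComplexOrder

variable {𝕜 n : Type*} [RCLike 𝕜] [Fintype n] [DecidableEq n]

lemma IsHermitian.one_sub_eq_conjStarAlgAut {M : Matrix n n 𝕜} (hM : M.IsHermitian) :
    1 - M = Unitary.conjStarAlgAut 𝕜 _ hM.eigenvectorUnitary
      (diagonal fun j => ((1 - hM.eigenvalues j : ℝ) : 𝕜)) := by
  conv_lhs =>
    rw [hM.spectral_theorem, ← map_one (Unitary.conjStarAlgAut 𝕜 _ hM.eigenvectorUnitary)]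
  rw [← map_sub, ← diagonal_one, diagonal_sub]
  congr 2
  ext j
  simp

lemma IsHermitian.l2_opNorm_one_sub_le [Nonempty n] {M : Matrix n n 𝕜} (hM : M.IsHermitian)
    (h : (1 - M).PosSemidef) : ‖1 - M‖ ≤ 1 - ⨅ j, hM.eigenvalues j := by
  rw [hM.one_sub_eq_conjStarAlgAut, Unitary.conjStarAlgAut_apply] at h ⊢
  rw [← Unitary.coe_star, CStarRing.norm_mul_coe_unitary, CStarRing.norm_coe_unitary_mul,
    l2_opNorm_diagonal, pi_norm_le_iff_of_nonempty]
  simp only [Unitary.isUnit_coe.posSemidef_star_right_conjugate_iff, posSemidef_diagonal_iff] at h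
  intro j
  have h1 : 0 ≤ 1 - hM.eigenvalues j := by exact_mod_cast h j
  have h2 : ⨅ i, hM.eigenvalues i ≤ hM.eigenvalues j := ciInf_le (Set.finite_range _).bddBelow j
  rw [RCLike.norm_ofReal, abs_of_nonneg h1]
  linarith

lemma IsHermitian.l2_opNorm_one_sub_pow_mul_le [Nonempty n] {M : Matrix n n 𝕜}
    (hM : M.IsHermitian) (h : (1 - M).PosSemidef) (Y : Matrix n n 𝕜) (k : ℕ) :
    ‖(1 - M) ^ k * Y‖ ≤ (1 - ⨅ j, hM.eigenvalues j) ^ k * ‖Y‖ :=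
  (norm_mul_le _ _).trans <| mul_le_mul_of_nonneg_right
    ((norm_pow_le _ k).trans (pow_le_pow_left₀ (norm_nonneg _) (hM.l2_opNorm_one_sub_le h) k))
    (norm_nonneg _)

end L2OpNorm

end Matrix

open scoped Matrix.Norms.L2Operator in
lemma specNorm_eq_l2_opNorm {n : ℕ} (M : Matrix (Fin n) (Fin n) ℝ) : specNorm M = ‖M‖ := rfl

section posSemidefSqrt

variable {n : ℕ} {M : Matrix (Fin n) (Fin n) ℝ} (hM : M.PosSemidef)

lemma posSemidefSqrt_eq_conjStarAlgAut : posSemidefSqrt hM = Unitary.conjStarAlgAut ℝ _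
    hM.1.eigenvectorUnitary (diagonal ((↑) ∘ (√·) ∘ hM.1.eigenvalues)) := rfl

lemma posSemidefSqrt_mul_self : posSemidefSqrt hM * posSemidefSqrt hM = M := by
  rw [posSemidefSqrt_eq_conjStarAlgAut, ← map_mul, diagonal_mul_diagonal]
  conv_rhs => rw [hM.1.spectral_theorem]
  congr 2
  ext i
  simp [Real.mul_self_sqrt (hM.eigenvalues_nonneg i)]

lemma posSemidefSqrt_isHermitian : (posSemidefSqrt hM).IsHermitian := by
  rw [IsHermitian, posSemidefSqrt_eq_conjStarAlgAut, ← star_eq_conjTranspose, ← map_star,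
    star_eq_conjTranspose, diagonal_conjTranspose]
  simp

end posSemidefSqrt

section sketch

variable {n q : ℕ} {A W : Matrix (Fin n) (Fin n) ℝ} {S : Matrix (Fin n) (Fin q) ℝ}

lemma isUnit_det_sketch (hA : IsUnit A.det) (hW : W.PosDef) (hS : S.rank = q) :
    IsUnit (Sᵀ * A * W * Aᵀ * S).det := by
  have hinj : Function.Injective (Aᵀ * S).mulVec := by
    apply mulVec_injective_of_rank_eq_card_s9
    rw [rank_mul_eq_right_of_isUnit_det _ _ (by rwa [det_transpose]), hS, Fintype.card_fin]
  have hpos := hW.conjTranspose_mul_mul_same hinj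
  rw [conjTranspose_eq_transpose_of_trivial, transpose_mul, transpose_transpose] at hpos
  simpa only [Matrix.mul_assoc] using isUnit_iff_ne_zero.mpr hpos.det_pos.ne'

lemma Zmat_mul_mul_Zmat (hB : IsUnit (Sᵀ * A * W * Aᵀ * S).det) :
    Zmat A W S * W * Zmat A W S = Zmat A W S := by
  have hcancel : (Sᵀ * A * W * Aᵀ * S)⁻¹ * (Sᵀ * A * W * Aᵀ * S) = 1 := nonsing_inv_mul _ hB
  calc Zmat A W S * W * Zmat A W S
      = Aᵀ * S * ((Sᵀ * A * W * Aᵀ * S)⁻¹ * (Sᵀ * A * W * Aᵀ * S)) *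
          (Sᵀ * A * W * Aᵀ * S)⁻¹ * Sᵀ * A := by simp only [Zmat, Matrix.mul_assoc]
    _ = Zmat A W S := by rw [hcancel, Matrix.mul_one, Zmat]

lemma Zmat_isHermitian (hW : W.IsHermitian) : (Zmat A W S).IsHermitian := by
  have hWt : Wᵀ = W := by rwa [← conjTranspose_eq_transpose_of_trivial]
  rw [IsHermitian, conjTranspose_eq_transpose_of_trivial]
  simp only [Zmat, transpose_mul, transpose_transpose, transpose_nonsing_inv, hWt,
    Matrix.mul_assoc]

lemma rowStep_sub_inv (hA : IsUnit A.det) (X : Matrix (Fin n) (Fin n) ℝ) :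
    rowStep A W S X - A⁻¹ = (1 - W * Zmat A W S) * (X - A⁻¹) := by
  have hAinv : A * A⁻¹ = 1 := mul_nonsing_inv _ hA
  set C := W * Aᵀ * S * (Sᵀ * A * W * Aᵀ * S)⁻¹ * Sᵀ
  have hZ : W * Zmat A W S = C * A := by simp only [Zmat, C, Matrix.mul_assoc]
  calc rowStep A W S X - A⁻¹ = X - A⁻¹ - C * (A * X) + C * (A * A⁻¹) := by
        rw [hAinv, rowStep]; noncomm_ring
    _ = (1 - W * Zmat A W S) * (X - A⁻¹) := by rw [hZ]; noncomm_ring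

lemma isStarProjection_mul_Zmat_mul {R : Matrix (Fin n) (Fin n) ℝ} (hRR : R * R = W)
    (hR : R.IsHermitian) (hW : W.IsHermitian) (hB : IsUnit (Sᵀ * A * W * Aᵀ * S).det) :
    IsStarProjection (R * Zmat A W S * R) where
  isIdempotentElem :=
    calc R * Zmat A W S * R * (R * Zmat A W S * R)
        = R * (Zmat A W S * (R * R) * Zmat A W S) * R := by simp only [Matrix.mul_assoc]
      _ = R * Zmat A W S * R := by rw [hRR, Zmat_mul_mul_Zmat hB]
  isSelfAdjoint := by
    simpa only [star_eq_conjTranspose, hR.eq] using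
      (Zmat_isHermitian (A := A) (S := S) hW).isSelfAdjoint.conjugate R

end sketch

section average

variable {n : ℕ} {ι : Type*} [Fintype ι] {A W : Matrix (Fin n) (Fin n) ℝ} {q : ι → ℕ}
  {S : ∀ i, Matrix (Fin n) (Fin (q i)) ℝ} {p : ι → ℝ}

lemma sum_prod_smul_foldl_rowStep_sub_inv (hA : IsUnit A.det) (hp : ∑ i, p i = 1)
    (X0 : Matrix (Fin n) (Fin n) ℝ) (k : ℕ) :
    ∑ s : Fin k → ι, (∏ j, p (s j)) •
      ((List.ofFn s).foldl (fun X i => rowStep A W (S i) X) X0 - A⁻¹) =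
      (1 - W * ∑ i, p i • Zmat A W (S i)) ^ k * (X0 - A⁻¹) := by
  rw [sum_prod_smul_foldl_sub _ _ _ (fun i => rowStep_sub_inv hA) p k X0,
    sum_smul_sub_of_sum_eq_one hp, Finset.mul_sum]
  simp only [mul_smul_comm]

lemma posSemidef_one_sub_mul_sum_smul_Zmat_mul {R : Matrix (Fin n) (Fin n) ℝ} (hRR : R * R = W)
    (hR : R.IsHermitian) (hA : IsUnit A.det) (hW : W.PosDef) (hS : ∀ i, (S i).rank = q i)
    (hp : ∀ i, 0 ≤ p i) (hsum : ∑ i, p i = 1) :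
    (1 - R * (∑ i, p i • Zmat A W (S i)) * R).PosSemidef := by
  have hsplit : 1 - R * (∑ i, p i • Zmat A W (S i)) * R =
      ∑ i, p i • (1 - R * Zmat A W (S i) * R) := by
    rw [sum_smul_sub_of_sum_eq_one hsum, Finset.mul_sum, Finset.sum_mul]
    simp only [mul_smul_comm, smul_mul_assoc]
  have hproj i := isStarProjection_mul_Zmat_mul hRR hR hW.1 (isUnit_det_sketch hA hW (hS i))
  open scoped MatrixOrder in
  exact hsplit ▸ posSemidef_sum _ fun i _ => (hproj i).one_sub_nonneg.posSemidef.smul (hp i)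

end average

theorem stmt9 {n r : ℕ} (hn : 0 < n) (A W : Matrix (Fin n) (Fin n) ℝ)
    (q : Fin r → ℕ) (S : ∀ i, Matrix (Fin n) (Fin (q i)) ℝ)
    (hA : IsUnit A.det) (hW : W.PosDef) (hS : ∀ i, (S i).rank = q i)
    (p : Fin r → ℝ) (hp : ∀ i, 0 < p i) (hsum : ∑ i, p i = 1)
    (X0 : Matrix (Fin n) (Fin n) ℝ) (k : ℕ)
    (hM : (posSemidefSqrt hW.posSemidef * (∑ i, p i • Zmat A W (S i)) *
      posSemidefSqrt hW.posSemidef).IsHermitian) :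
    specNorm ((posSemidefSqrt hW.posSemidef)⁻¹ *
        (∑ s : Fin k → Fin r, (∏ j, p (s j)) •
          ((List.ofFn s).foldl (fun X i => rowStep A W (S i) X) X0 - A⁻¹)) *
        (posSemidefSqrt hW.posSemidef)⁻¹) ≤
      (1 - ⨅ j, hM.eigenvalues j) ^ k *
        specNorm ((posSemidefSqrt hW.posSemidef)⁻¹ * (X0 - A⁻¹) * (posSemidefSqrt hW.posSemidef)⁻¹) := by
  have : Nonempty (Fin n) := ⟨⟨0, hn⟩⟩
  have hRR := posSemidefSqrt_mul_self hW.posSemidef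
  have hRh := posSemidefSqrt_isHermitian hW.posSemidef
  generalize posSemidefSqrt hW.posSemidef = R at hM hRR hRh ⊢
  have hR : IsUnit R.det :=
    (isUnit_iff_isUnit_det R).mp (isUnit_of_mul_isUnit_left (hRR ▸ hW.isUnit))
  rw [sum_prod_smul_foldl_rowStep_sub_inv hA hsum, ← Matrix.mul_assoc,
    ((semiconjBy_inv_one_sub_mul hR hRR).pow_right k).eq,
    Matrix.mul_assoc (_ ^ k), Matrix.mul_assoc (_ ^ k),
    specNorm_eq_l2_opNorm, specNorm_eq_l2_opNorm]
  open scoped Matrix.Norms.L2Operator in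
  exact hM.l2_opNorm_one_sub_pow_mul_le (posSemidef_one_sub_mul_sum_smul_Zmat_mul hRR hRh hA hW
    hS (fun i => (hp i).le) hsum) _ k
end
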